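/- arXiv:0910.0237 — 4 statements merged into one kernel-verified Lean document; each statement's English description precedes it below -/
import Mathlib

section
/- Let π : X → Y be a factor map from a Smale space (X,F) to a finitely presented system (Y,f). Then there exists δ_π > 0 such that whenever x, x' ∈ X satisfy d(x,x') < δ_π (so that the bracket [x,x'] is defined in X), one has π([x,x']) = [π(x), π(x')]. -/
/-!
A factor map of a compact space is uniformly continuous, so orbits that stay `η`-close in `X`
have images that stay `εY`-close in `Y`. Canonical coordinates provide a bracket of `x, x'` at
the scale `min η εX`; by uniqueness of the `εX`-bracket it is the `εX`-bracket itself, and its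
image therefore lies in `Ws f εY (π x) ∩ Wu f εY (π x')`.
-/

open Filter Topology Set

/-- `f` is expansive with expansive constant `c`. -/
def Expansive {X : Type*} [MetricSpace X] (f : Equiv.Perm X) (c : ℝ) : Prop :=
  ∀ p q : X, p ≠ q → ∃ n : ℤ, c < dist ((f ^ n) p) ((f ^ n) q)

/-- The ε-stable set of `x`. -/
def Ws {X : Type*} [MetricSpace X] (f : Equiv.Perm X) (ε : ℝ) (x : X) : Set X :=
  {y | ∀ n : ℕ, dist ((f ^ (n : ℤ)) x) ((f ^ (n : ℤ)) y) < ε}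

/-- The ε-unstable set of `x`. -/
def Wu {X : Type*} [MetricSpace X] (f : Equiv.Perm X) (ε : ℝ) (x : X) : Set X :=
  {y | ∀ n : ℕ, dist ((f ^ (-(n : ℤ))) x) ((f ^ (-(n : ℤ))) y) < ε}

/-- The stable set of `x`. -/
def stableSet {X : Type*} [MetricSpace X] (f : Equiv.Perm X) (x : X) : Set X :=
  {y | Filter.Tendsto (fun n : ℕ => dist ((f ^ (n : ℤ)) x) ((f ^ (n : ℤ)) y))
    Filter.atTop (nhds 0)}

/-- The unstable set of `x`. -/
def unstableSet {X : Type*} [MetricSpace X] (f : Equiv.Perm X) (x : X) : Set X :=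
  {y | Filter.Tendsto (fun n : ℕ => dist ((f ^ (-(n : ℤ))) x) ((f ^ (-(n : ℤ))) y))
    Filter.atTop (nhds 0)}

/-- Canonical coordinates: for all sufficiently small ε > 0 there is δ > 0 such that
points at distance < δ have a unique bracket `[x,y] = W^s_ε(x) ∩ W^u_ε(y)`. -/
def CanonicalCoords {X : Type*} [MetricSpace X] (f : Equiv.Perm X) : Prop :=
  ∃ ε₀ > 0, ∀ ε : ℝ, 0 < ε → ε ≤ ε₀ → ∃ δ > 0, ∀ x y : X, dist x y < δ →
    ∃! z, z ∈ Ws f ε x ∩ Wu f ε y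

/-- A Smale space: an expansive homeomorphism with canonical coordinates. -/
def IsSmale {X : Type*} [MetricSpace X] (f : Equiv.Perm X) : Prop :=
  Continuous (⇑f) ∧ Continuous (⇑f.symm) ∧ (∃ c > 0, Expansive f c) ∧ CanonicalCoords f

/-- Topological transitivity. -/
def TopTransitive {X : Type*} [MetricSpace X] (f : Equiv.Perm X) : Prop :=
  ∀ U V : Set X, IsOpen U → IsOpen V → U.Nonempty → V.Nonempty →
    ∃ n : ℕ, ((f ^ (n : ℤ)) ⁻¹' U ∩ V).Nonempty

/-- A periodic point of `f`. -/
def IsPeriodicPoint {X : Type*} [MetricSpace X] (f : Equiv.Perm X) (p : X) : Prop :=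
  ∃ N : ℕ, 0 < N ∧ (f ^ (N : ℤ)) p = p

/-- A factor map (surjective continuous semiconjugacy). -/
def IsFactorMap {X Y : Type*} [MetricSpace X] [MetricSpace Y]
    (F : Equiv.Perm X) (f : Equiv.Perm Y) (π : X → Y) : Prop :=
  Continuous π ∧ Function.Surjective π ∧ ∀ x, π (F x) = f (π x)

/-- A map is u-resolving if it is injective on unstable sets. -/
def UResolving {X Y : Type*} [MetricSpace X] (F : Equiv.Perm X) (π : X → Y) : Prop :=
  ∀ x : X, Set.InjOn π (unstableSet F x)

/-- A map is s-resolving if it is injective on stable sets. -/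
def SResolving {X Y : Type*} [MetricSpace X] (F : Equiv.Perm X) (π : X → Y) : Prop :=
  ∀ x : X, Set.InjOn π (stableSet F x)

/-- The shift map on bi-infinite sequences. -/
def shiftE (A : Type*) : Equiv.Perm (ℤ → A) where
  toFun x i := x (i + 1)
  invFun x i := x (i - 1)
  left_inv x := funext fun i => congrArg x (by ring)
  right_inv x := funext fun i => congrArg x (by ring)

/-- The word `w` occurs in the sequence `x`. -/
def OccursIn {A : Type*} {k : ℕ} (w : Fin k → A) (x : ℤ → A) : Prop :=
  ∃ i : ℤ, ∀ j : Fin k, x (i + (j : ℤ)) = w j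

/-- A subshift of finite type: the sequences avoiding a finite set of forbidden words. -/
def IsSFT {A : Type*} (S : Set (ℤ → A)) : Prop :=
  ∃ Fw : Set ((k : ℕ) × (Fin k → A)), Fw.Finite ∧
    S = {x | ∀ w ∈ Fw, ¬ OccursIn w.2 x}

/-- A one-step SFT (vertex shift) with transition rule `T`. -/
def IsOneStepSFTFor {A : Type*} (T : A → A → Prop) (S : Set (ℤ → A)) : Prop :=
  S = {x | ∀ i : ℤ, T (x i) (x (i + 1))}

/-- `S` is invariant under the shift and its inverse. -/
def ShiftInvariant {A : Type*} (S : Set (ℤ → A)) : Prop :=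
  (∀ x ∈ S, shiftE A x ∈ S) ∧ (∀ x ∈ S, (shiftE A).symm x ∈ S)

/-- A factor map from the subshift `(S, σ)` onto the system `(Y, f)`. -/
def IsSubshiftFactorMap {A Y : Type*} [TopologicalSpace A] [MetricSpace Y]
    (S : Set (ℤ → A)) (f : Equiv.Perm Y) (φ : (ℤ → A) → Y) : Prop :=
  ContinuousOn φ S ∧ φ '' S = Set.univ ∧ ∀ x ∈ S, φ (shiftE A x) = f (φ x)

/-- Topological transitivity of the shift restricted to `S`. -/
def SubshiftTransitive {A : Type*} [TopologicalSpace A] (S : Set (ℤ → A)) : Prop :=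
  ∀ U V : Set (ℤ → A), IsOpen U → IsOpen V → (U ∩ S).Nonempty → (V ∩ S).Nonempty →
    ∃ n : ℕ, (((shiftE A) ^ (n : ℤ)) ⁻¹' U ∩ V ∩ S).Nonempty

/-- The stable set of `t` in the subshift `S`: points eventually agreeing with `t`. -/
def shiftStable {A : Type*} (S : Set (ℤ → A)) (t : ℤ → A) : Set (ℤ → A) :=
  {t' ∈ S | ∃ N : ℤ, ∀ i ≥ N, t' i = t i}

/-- A finitely presented system: an expansive system that is a factor of an SFT. -/
def FinitelyPresented {Y : Type*} [MetricSpace Y] (f : Equiv.Perm Y) : Prop :=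
  Continuous (⇑f) ∧ Continuous (⇑f.symm) ∧ (∃ c > 0, Expansive f c) ∧
  ∃ (N : ℕ) (S : Set (ℤ → Fin N)), IsSFT S ∧ ShiftInvariant S ∧ S.Nonempty ∧
    ∃ φ : (ℤ → Fin N) → Y, IsSubshiftFactorMap S f φ

open Function

theorem Function.Semiconj.perm_zpow {X Y : Type*} {F : Equiv.Perm X} {f : Equiv.Perm Y}
    {π : X → Y} (h : Semiconj π F f) : ∀ n : ℤ, Semiconj π ⇑(F ^ n) ⇑(f ^ n)
  | (n : ℕ) => by simpa only [zpow_natCast, Equiv.Perm.coe_pow] using h.iterate_right n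
  | .negSucc n => by
    rw [zpow_negSucc, zpow_negSucc]
    have hn : Semiconj π ⇑(F ^ (n + 1)) ⇑(f ^ (n + 1)) := by
      simpa only [Equiv.Perm.coe_pow] using h.iterate_right (n + 1)
    exact hn.inverses_right (Equiv.apply_symm_apply _) (Equiv.symm_apply_apply _)

section LocalSets

variable {X Y : Type*} [MetricSpace X] [MetricSpace Y] {F : Equiv.Perm X} {f : Equiv.Perm Y}

theorem Ws_mono {ε ε' : ℝ} (h : ε ≤ ε') (x : X) : Ws F ε x ⊆ Ws F ε' x :=
  fun _ hy n => (hy n).trans_le h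

theorem Wu_mono {ε ε' : ℝ} (h : ε ≤ ε') (x : X) : Wu F ε x ⊆ Wu F ε' x :=
  fun _ hy n => (hy n).trans_le h

theorem mapsTo_Ws_of_dist_lt {π : X → Y} (hπ : Semiconj π F f) {η ε : ℝ}
    (hη : ∀ a b, dist a b < η → dist (π a) (π b) < ε) (x : X) :
    MapsTo π (Ws F η x) (Ws f ε (π x)) := fun y hy n => by
  rw [← hπ.perm_zpow, ← hπ.perm_zpow]
  exact hη _ _ (hy n)

theorem mapsTo_Wu_of_dist_lt {π : X → Y} (hπ : Semiconj π F f) {η ε : ℝ}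
    (hη : ∀ a b, dist a b < η → dist (π a) (π b) < ε) (x : X) :
    MapsTo π (Wu F η x) (Wu f ε (π x)) := fun y hy n => by
  rw [← hπ.perm_zpow, ← hπ.perm_zpow]
  exact hη _ _ (hy n)

theorem CanonicalCoords.exists_bracket (h : CanonicalCoords F) {ε : ℝ} (hε : 0 < ε) :
    ∃ δ > 0, ∀ x y : X, dist x y < δ → (Ws F ε x ∩ Wu F ε y).Nonempty := by
  obtain ⟨ε₀, hε₀, hcc⟩ := h
  obtain ⟨δ, hδ, hbr⟩ := hcc (min ε ε₀) (lt_min hε hε₀) (min_le_right _ _)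
  refine ⟨δ, hδ, fun x y hxy => ?_⟩
  obtain ⟨z, ⟨hzs, hzu⟩, -⟩ := hbr x y hxy
  exact ⟨z, Ws_mono (min_le_left _ _) x hzs, Wu_mono (min_le_left _ _) y hzu⟩

end LocalSets

theorem stmt1_general {X Y : Type*} [MetricSpace X] [CompactSpace X] [MetricSpace Y]
    (F : Equiv.Perm X) (f : Equiv.Perm Y)
    (hX : IsSmale F)
    (π : X → Y) (hπ : IsFactorMap F f π)
    (εX εY : ℝ)
    (hεX0 : 0 < εX) (hεY0 : 0 < εY)
    (hbr : ∃ δ0 > 0, ∀ x y : X, dist x y < δ0 → ∃! z, z ∈ Ws F εX x ∩ Wu F εX y) :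
    ∃ δπ > 0, ∀ x x' : X, dist x x' < δπ →
      (∃! z, z ∈ Ws F εX x ∩ Wu F εX x') ∧
      ∀ z ∈ Ws F εX x ∩ Wu F εX x', π z ∈ Ws f εY (π x) ∩ Wu f εY (π x') := by
  obtain ⟨hπc, -, hsemi⟩ := hπ
  obtain ⟨η, hη0, hη⟩ := Metric.uniformContinuous_iff.mp
    (CompactSpace.uniformContinuous_of_continuous hπc) εY hεY0
  obtain ⟨δ0, hδ0, hbrX⟩ := hbr
  obtain ⟨δ1, hδ1, hbrη⟩ := hX.2.2.2.exists_bracket (lt_min hη0 hεX0)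
  refine ⟨min δ0 δ1, lt_min hδ0 hδ1, fun x x' hd => ?_⟩
  have huniq := hbrX x x' (hd.trans_le (min_le_left _ _))
  refine ⟨huniq, fun z hz => ?_⟩
  obtain ⟨z₁, hz₁s, hz₁u⟩ := hbrη x x' (hd.trans_le (min_le_right _ _))
  obtain rfl : z = z₁ := huniq.unique hz
    ⟨Ws_mono (min_le_right _ _) x hz₁s, Wu_mono (min_le_right _ _) x' hz₁u⟩
  exact ⟨mapsTo_Ws_of_dist_lt hsemi hη x (Ws_mono (min_le_left _ _) x hz₁s),
    mapsTo_Wu_of_dist_lt hsemi hη x' (Wu_mono (min_le_left _ _) x' hz₁u)⟩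

/-- For a factor map `π` from a Smale space `(X,F)` to a finitely presented
system `(Y,f)`, there is `δ_π > 0` such that if `d(x,x') < δ_π` (so the bracket `[x,x']`
is defined), then `π([x,x']) = [π(x), π(x')]`. -/
theorem stmt1 {X Y : Type*} [MetricSpace X] [CompactSpace X] [MetricSpace Y] [CompactSpace Y]
    (F : Equiv.Perm X) (f : Equiv.Perm Y)
    (hX : IsSmale F) (hY : FinitelyPresented f)
    (π : X → Y) (hπ : IsFactorMap F f π)
    (cX cY εX εY : ℝ) (hcX : 0 < cX) (hcY : 0 < cY)
    (hEX : Expansive F cX) (hEY : Expansive f cY)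
    (hεX0 : 0 < εX) (hεX : εX < cX / 2) (hεY0 : 0 < εY) (hεY : εY < cY / 2)
    (hbr : ∃ δ0 > 0, ∀ x y : X, dist x y < δ0 → ∃! z, z ∈ Ws F εX x ∩ Wu F εX y) :
    ∃ δπ > 0, ∀ x x' : X, dist x x' < δπ →
      (∃! z, z ∈ Ws F εX x ∩ Wu F εX x') ∧
      ∀ z ∈ Ws F εX x ∩ Wu F εX x', π z ∈ Ws f εY (π x) ∩ Wu f εY (π x') :=
  stmt1_general F f hX π hπ εX εY hεX0 hεY0 hbr
end

section
/- Let (X,F) be a transitive Smale space, (Y,f) finitely presented, and π : X → Y a factor map. Suppose there exist a convergent sequence q_n ∈ Y and periodic points p_n, p'_n ∈ X with π(p_n) = π(p'_n) = q_n, p_n ≠ p'_n for all n, and lim p_n = lim p'_n. Then π is infinite-to-one, i.e., some point of Y has infinitely many π-preimages. -/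
/-!
Bracket two close periodic points `P, P'` of the same fibre: `z = [P, P']` shadows `P` in
forward and `P'` in backward time. As `π P = π P'`, expansiveness of `f` forces `π z = π P`.
Expansiveness of `F` gives `z ≠ P` (otherwise `P, P'` would be periodic points shadowing each
other backwards, hence equal) and makes `z` non-periodic (a periodic point in `W^s_ε(P)` is `P`).
So the `F^N`-orbit of `z`, for `N` a period of `P`, is an infinite subset of the fibre of `π P`.
-/

open Filter Topology Set

section Periodic

variable {X : Type*} [MetricSpace X] {f : Equiv.Perm X}

theorem IsPeriodicPoint.exists_common_period {x y : X} (hx : IsPeriodicPoint f x)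
    (hy : IsPeriodicPoint f y) :
    ∃ N : ℕ, 0 < N ∧ (f ^ (N : ℤ)) x = x ∧ (f ^ (N : ℤ)) y = y := by
  obtain ⟨M, hM, hxM⟩ := hx
  obtain ⟨N, hN, hyN⟩ := hy
  refine ⟨M * N, Nat.mul_pos hM hN, ?_, ?_⟩
  · rw [Nat.cast_mul, zpow_mul]
    exact Equiv.Perm.zpow_apply_eq_self_of_apply_eq_self hxM _
  · rw [Nat.cast_mul, mul_comm, zpow_mul]
    exact Equiv.Perm.zpow_apply_eq_self_of_apply_eq_self hyN _

theorem IsPeriodicPoint.inv {x : X} (hx : IsPeriodicPoint f x) : IsPeriodicPoint f⁻¹ x := by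
  obtain ⟨N, hN, hxN⟩ := hx
  exact ⟨N, hN, by rw [inv_zpow, Equiv.Perm.inv_eq_iff_eq, hxN]⟩

theorem injective_zpow_apply_of_not_isPeriodicPoint {z : X} (hz : ¬ IsPeriodicPoint f z) :
    Function.Injective fun k : ℕ => (f ^ (k : ℤ)) z := by
  suffices ∀ a b : ℕ, a < b → (f ^ (a : ℤ)) z ≠ (f ^ (b : ℤ)) z by
    intro a b hab
    by_contra hne
    rcases Nat.lt_or_gt_of_ne hne with h | h
    exacts [this a b h hab, this b a h hab.symm]
  intro a b hab heq
  refine hz ⟨b - a, Nat.sub_pos_of_lt hab, ?_⟩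
  rw [Nat.cast_sub hab.le, sub_eq_neg_add, zpow_add, Equiv.Perm.mul_apply, ← heq,
    ← Equiv.Perm.mul_apply, ← zpow_add, neg_add_cancel, zpow_zero, Equiv.Perm.one_apply]

end Periodic

theorem Wu_eq_Ws_inv {X : Type*} [MetricSpace X] (f : Equiv.Perm X) (ε : ℝ) (x : X) :
    Wu f ε x = Ws f⁻¹ ε x := by
  simp only [Wu, Ws, inv_zpow']

namespace Expansive

variable {X : Type*} [MetricSpace X] {f : Equiv.Perm X} {c ε : ℝ}

theorem inv (hE : Expansive f c) : Expansive f⁻¹ c := by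
  intro x y hxy
  obtain ⟨n, hn⟩ := hE x y hxy
  exact ⟨-n, by rwa [inv_zpow', neg_neg]⟩

/-- Periodicity turns forward-time closeness into closeness at all times. -/
theorem eq_of_mem_Ws (hE : Expansive f c) (hε : ε ≤ c) {x y : X} (hx : IsPeriodicPoint f x)
    (hy : IsPeriodicPoint f y) (h : y ∈ Ws f ε x) : x = y := by
  obtain ⟨N, hN, hxN, hyN⟩ := hx.exists_common_period hy
  have hfold : ∀ (w : X), (f ^ (N : ℤ)) w = w → ∀ j : ℤ, (f ^ j) w = (f ^ (j % N)) w := by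
    intro w hw j
    conv_lhs => rw [← Int.emod_add_mul_ediv j N, zpow_add, Equiv.Perm.mul_apply, zpow_mul,
      Equiv.Perm.zpow_apply_eq_self_of_apply_eq_self hw]
  by_contra hxy
  obtain ⟨j, hj⟩ := hE x y hxy
  have hj0 : 0 ≤ j % N := Int.emod_nonneg j (by exact_mod_cast hN.ne')
  have hclose := h (j % N).toNat
  rw [Int.toNat_of_nonneg hj0, ← hfold x hxN, ← hfold y hyN] at hclose
  linarith

theorem eq_of_mem_Wu (hE : Expansive f c) (hε : ε ≤ c) {x y : X} (hx : IsPeriodicPoint f x)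
    (hy : IsPeriodicPoint f y) (h : y ∈ Wu f ε x) : x = y :=
  hE.inv.eq_of_mem_Ws hε hx.inv hy.inv (Wu_eq_Ws_inv f ε x ▸ h)

end Expansive

theorem map_zpow_apply_of_semiconj {X Y : Type*} {F : Equiv.Perm X} {f : Equiv.Perm Y}
    {π : X → Y} (hπF : ∀ x, π (F x) = f (π x)) (k : ℤ) (x : X) :
    π ((F ^ k) x) = (f ^ k) (π x) := by
  induction k using Int.induction_on generalizing x with
  | zero => rfl
  | succ k ih => rw [zpow_add_one, zpow_add_one, Equiv.Perm.mul_apply, ih, hπF]; rfl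
  | pred k ih =>
    have hπF_inv : π (F⁻¹ x) = f⁻¹ (π x) := by
      rw [Equiv.Perm.eq_inv_iff_eq, ← hπF, ← Equiv.Perm.mul_apply, mul_inv_cancel,
        Equiv.Perm.one_apply]
    rw [zpow_sub_one, zpow_sub_one, Equiv.Perm.mul_apply, ih, hπF_inv]; rfl

theorem preimage_infinite_of_not_isPeriodicPoint {X Y : Type*} [MetricSpace X]
    {F : Equiv.Perm X} {f : Equiv.Perm Y} {π : X → Y} (hπF : ∀ x, π (F x) = f (π x))
    {P z : X} (hP : IsPeriodicPoint F P) (hz : ¬ IsPeriodicPoint F z) (hπz : π z = π P) :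
    (π ⁻¹' {π P}).Infinite := by
  obtain ⟨N, hN, hPN⟩ := hP
  refine Set.infinite_of_injective_forall_mem
    ((injective_zpow_apply_of_not_isPeriodicPoint hz).comp (mul_left_injective₀ hN.ne'))
    fun k => ?_
  change π ((F ^ ((k * N : ℕ) : ℤ)) z) = π P
  rw [map_zpow_apply_of_semiconj hπF, hπz, ← map_zpow_apply_of_semiconj hπF, Nat.cast_mul,
    mul_comm, zpow_mul, Equiv.Perm.zpow_apply_eq_self_of_apply_eq_self hPN]

/-- The images of `z` and `x` stay `c`-close: forwards along `x`, backwards along `x'`. -/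
theorem Expansive.map_eq_of_mem_Ws_inter_Wu {X Y : Type*} [MetricSpace X] [MetricSpace Y]
    {F : Equiv.Perm X} {f : Equiv.Perm Y} {π : X → Y} {c ε : ℝ} (hE : Expansive f c)
    (hπF : ∀ x, π (F x) = f (π x)) (hmod : ∀ {a b : X}, dist a b < ε → dist (π a) (π b) < c)
    {x x' z : X} (hxx' : π x = π x') (hz : z ∈ Ws F ε x ∩ Wu F ε x') : π z = π x := by
  by_contra hne
  obtain ⟨j, hj⟩ := hE _ _ (Ne.symm hne)
  rw [← map_zpow_apply_of_semiconj hπF, ← map_zpow_apply_of_semiconj hπF] at hj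
  obtain ⟨n, rfl | rfl⟩ := Int.eq_nat_or_neg j
  · exact hj.not_gt (hmod (hz.1 n))
  · rw [map_zpow_apply_of_semiconj hπF, hxx', ← map_zpow_apply_of_semiconj hπF] at hj
    exact hj.not_gt (hmod (hz.2 n))

theorem stmt2_general {X Y : Type*} [MetricSpace X] [CompactSpace X] [MetricSpace Y]
    (F : Equiv.Perm X) (f : Equiv.Perm Y)
    (hX : IsSmale F) (hY : FinitelyPresented f)
    (π : X → Y) (hπ : IsFactorMap F f π)
    (q : ℕ → Y) (p p' : ℕ → X)
    (hper : ∀ n, IsPeriodicPoint F (p n) ∧ IsPeriodicPoint F (p' n))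
    (hmap : ∀ n, π (p n) = q n ∧ π (p' n) = q n)
    (hne : ∀ n, p n ≠ p' n)
    (L : X) (hp : Filter.Tendsto p Filter.atTop (nhds L))
    (hp' : Filter.Tendsto p' Filter.atTop (nhds L)) :
    ∃ y : Y, (π ⁻¹' {y}).Infinite := by
  obtain ⟨-, -, ⟨cF, hcF, hEF⟩, ε₀, hε₀, hbracket⟩ := hX
  obtain ⟨-, -, ⟨cf, hcf, hEf⟩, -⟩ := hY
  obtain ⟨hπc, -, hπF⟩ := hπ
  obtain ⟨ε₁, hε₁, hmod⟩ := Metric.uniformContinuous_iff.mp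
    (CompactSpace.uniformContinuous_of_continuous hπc) cf hcf
  obtain ⟨ε, hε, hεε₀, hεcF, hεε₁⟩ : ∃ ε, 0 < ε ∧ ε ≤ ε₀ ∧ ε ≤ cF ∧ ε ≤ ε₁ :=
    ⟨min ε₀ (min cF ε₁), by positivity, min_le_left _ _,
      (min_le_right _ _).trans (min_le_left _ _), (min_le_right _ _).trans (min_le_right _ _)⟩
  obtain ⟨δ, hδ, hbracketδ⟩ := hbracket ε hε hεε₀
  obtain ⟨n, hn⟩ := ((hp.dist hp').eventually (gt_mem_nhds (by rwa [dist_self]))).exists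
  obtain ⟨z, ⟨hzs, hzu⟩, -⟩ := hbracketδ (p n) (p' n) hn
  have hzp : z ≠ p n := fun h =>
    hne n (hEF.eq_of_mem_Wu hεcF (hper n).2 (hper n).1 (h ▸ hzu)).symm
  have hz_aper : ¬ IsPeriodicPoint F z := fun hz =>
    hzp (hEF.eq_of_mem_Ws hεcF (hper n).1 hz hzs).symm
  have hπz : π z = π (p n) := hEf.map_eq_of_mem_Ws_inter_Wu hπF
    (fun h => hmod (h.trans_le hεε₁)) ((hmap n).1.trans (hmap n).2.symm) ⟨hzs, hzu⟩
  exact ⟨π (p n), preimage_infinite_of_not_isPeriodicPoint hπF (hper n).1 hz_aper hπz⟩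

/-- If periodic pairs with equal images converge to a common point, then
the factor map from a transitive Smale space to a finitely presented system is
infinite-to-one. -/
theorem stmt2 {X Y : Type*} [MetricSpace X] [CompactSpace X] [MetricSpace Y] [CompactSpace Y]
    (F : Equiv.Perm X) (f : Equiv.Perm Y)
    (hX : IsSmale F) (hXt : TopTransitive F) (hY : FinitelyPresented f)
    (π : X → Y) (hπ : IsFactorMap F f π)
    (q : ℕ → Y) (p p' : ℕ → X) (q₀ : Y) (hq : Filter.Tendsto q Filter.atTop (nhds q₀))
    (hper : ∀ n, IsPeriodicPoint F (p n) ∧ IsPeriodicPoint F (p' n))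
    (hmap : ∀ n, π (p n) = q n ∧ π (p' n) = q n)
    (hne : ∀ n, p n ≠ p' n)
    (L : X) (hp : Filter.Tendsto p Filter.atTop (nhds L))
    (hp' : Filter.Tendsto p' Filter.atTop (nhds L)) :
    ∃ y : Y, (π ⁻¹' {y}).Infinite :=
  stmt2_general F f hX hY π hπ q p p' hper hmap hne L hp hp'
end

section
/- Let (X,F) be a transitive Smale space, (Y,f) finitely presented, π : X → Y a finite-to-one factor map, and M = min_{y ∈ Y} #π⁻¹(y). Then there exists a dense open set W ⊂ Y such that every periodic point of f in W has exactly M preimages under π. -/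
open Filter Topology Set

/-! Fibres over periodic points are uniformly separated: the bracket `B` of two nearby points
`z, z'` of such a fibre shadows `z` forwards and `z'` backwards, so by expansivity of `f` it lies
in the same finite fibre; then `z, z', B` are periodic with a common period, the shadowing holds
for all times, and expansivity of `F` gives `z = z'`. Pick `y₀` with `M` preimages. As `π` is a
closed map, fibres near `y₀` lie in a small neighbourhood of `π⁻¹(y₀)`, and a separated such fibre
injects into `π⁻¹(y₀)`. Fibre cardinality is constant along orbits, so `W`, the set of points whose
orbit enters a neighbourhood of `y₀`, works; it is dense because `f` inherits transitivity. -/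

open Function Metric

namespace Function.Periodic

variable {α : Type*} {g : ℤ → α} {P : ℤ}

theorem exists_natCast_eq (hg : Periodic g P) (hP : 0 < P) (n : ℤ) : ∃ m : ℕ, g m = g n :=
  ⟨(n + n.natAbs * P).toNat, by
    have : (n.natAbs : ℤ) ≤ n.natAbs * P := le_mul_of_one_le_right (by omega) hP
    rw [Int.toNat_of_nonneg (by omega)]
    exact hg.int_mul _ n⟩

theorem exists_neg_natCast_eq (hg : Periodic g P) (hP : 0 < P) (n : ℤ) :
    ∃ m : ℕ, g (-m) = g n :=
  ⟨(n.natAbs * P - n).toNat, by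
    have : (n.natAbs : ℤ) ≤ n.natAbs * P := le_mul_of_one_le_right (by omega) hP
    rw [Int.toNat_of_nonneg (by omega)]
    convert hg.int_mul (-n.natAbs) n using 2
    push_cast
    ring⟩

end Function.Periodic

theorem Function.Semiconj.zpow_perm {X Y : Type*} {F : Equiv.Perm X} {f : Equiv.Perm Y}
    {π : X → Y} (h : Semiconj π F f) (n : ℤ) : Semiconj π ⇑(F ^ n) ⇑(f ^ n) := by
  rcases Int.eq_nat_or_neg n with ⟨m, rfl | rfl⟩
  · simpa only [zpow_natCast, ← Equiv.Perm.iterate_eq_pow] using h.iterate_right m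
  · have hinv : Semiconj π ⇑F⁻¹ ⇑f⁻¹ := h.inverses_right F.apply_symm_apply f.symm_apply_apply
    simpa only [zpow_neg, zpow_natCast, ← inv_pow, ← Equiv.Perm.iterate_eq_pow]
      using hinv.iterate_right m

theorem mem_periodicPts_of_finite_fiber {X Y : Type*} {F : X → X} {f : Y → Y} {π : X → Y}
    (h : Semiconj π F f) (hF : Injective F) {x : X} (hfin : (π ⁻¹' {π x}).Finite)
    (hx : π x ∈ periodicPts f) : x ∈ periodicPts F := by
  obtain ⟨N, hN, hNx⟩ := hx
  have hmaps : MapsTo F^[N] (π ⁻¹' {π x}) (π ⁻¹' {π x}) := fun w hw => by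
    simp only [mem_preimage, mem_singleton_iff] at hw ⊢
    rw [(h.iterate_right N).eq, hw, hNx.eq]
  have : Finite (π ⁻¹' {π x}) := hfin
  obtain ⟨k, hk, hkx⟩ := (hmaps.restrict_inj.2 (hF.iterate N).injOn).mem_periodicPts ⟨x, rfl⟩
  have hkx' : IsPeriodicPt F^[N] k x := hkx.map (g := Subtype.val) fun _ => rfl
  exact mk_mem_periodicPts (mul_pos hN hk)
    (by rw [IsPeriodicPt, IsFixedPt, iterate_mul]; exact hkx')

theorem ncard_preimage_singleton_apply {X Y : Type*} {g : Equiv.Perm X} {g' : Equiv.Perm Y}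
    {π : X → Y} (h : Semiconj π g g') (y : Y) :
    (π ⁻¹' {g' y}).ncard = (π ⁻¹' {y}).ncard := by
  have himage : π ⁻¹' {g' y} = g '' (π ⁻¹' {y}) := by
    rw [g.image_eq_preimage_symm]
    ext x
    simp only [mem_preimage, mem_singleton_iff]
    exact ⟨fun hx => g'.injective (by rw [← h.eq, g.apply_symm_apply, hx]),
      fun hx => by rw [← g.apply_symm_apply x, h.eq, hx]⟩
  rw [himage, ncard_image_of_injective _ g.injective]

theorem IsClosedMap.eventually_preimage_singleton_subset {X Y : Type*} [TopologicalSpace X]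
    [TopologicalSpace Y] {π : X → Y} (hπ : IsClosedMap π) {U : Set X} (hU : IsOpen U) {y₀ : Y}
    (h : π ⁻¹' {y₀} ⊆ U) : ∀ᶠ y in 𝓝 y₀, π ⁻¹' {y} ⊆ U := by
  have hy₀ : y₀ ∈ (π '' Uᶜ)ᶜ := fun ⟨x, hxU, hx⟩ => hxU (h hx)
  filter_upwards [(hπ _ hU.isClosed_compl).isOpen_compl.mem_nhds hy₀] with y hy x hx
  by_contra hxU
  exact hy ⟨x, hxU, hx⟩

theorem Set.ncard_le_ncard_of_subset_thickening {α : Type*} [PseudoMetricSpace α]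
    {s t : Set α} {δ : ℝ} (ht : t.Finite) (hs : ∀ a ∈ s, ∀ b ∈ s, dist a b < δ → a = b)
    (hst : s ⊆ thickening (δ / 2) t) : s.ncard ≤ t.ncard := by
  have hnear : ∀ a ∈ s, ∃ b ∈ t, dist a b < δ / 2 := fun a ha => mem_thickening_iff.1 (hst ha)
  choose! g hgt hgd using hnear
  refine ncard_le_ncard_of_injOn g hgt (fun a ha b hb hab => hs a ha b hb ?_) ht
  calc dist a b ≤ dist a (g a) + dist b (g a) := dist_triangle_right _ _ _
    _ = dist a (g a) + dist b (g b) := by rw [hab]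
    _ < δ / 2 + δ / 2 := add_lt_add (hgd a ha) (hgd b hb)
    _ = δ := add_halves δ

section Dynamics

variable {X Y : Type*} [MetricSpace X] [MetricSpace Y]

theorem isPeriodicPoint_iff_mem_periodicPts {f : Equiv.Perm X} {p : X} :
    IsPeriodicPoint f p ↔ p ∈ periodicPts f := by
  simp only [IsPeriodicPoint, mem_periodicPts, IsPeriodicPt, IsFixedPt, zpow_natCast,
    Equiv.Perm.iterate_eq_pow]

theorem Expansive.eq_of_forall_dist_le {f : Equiv.Perm X} {c : ℝ} (hf : Expansive f c)
    {p q : X} (h : ∀ n : ℤ, dist ((f ^ n) p) ((f ^ n) q) ≤ c) : p = q := by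
  by_contra hne
  obtain ⟨n, hn⟩ := hf p q hne
  exact (h n).not_gt hn

theorem TopTransitive.of_isFactorMap {F : Equiv.Perm X} {f : Equiv.Perm Y} {π : X → Y}
    (hF : TopTransitive F) (hπ : IsFactorMap F f π) : TopTransitive f := by
  obtain ⟨hc, hs, hsemi⟩ := hπ
  rintro U V hU hV ⟨u, hu⟩ ⟨v, hv⟩
  obtain ⟨xu, rfl⟩ := hs u
  obtain ⟨xv, rfl⟩ := hs v
  obtain ⟨n, x, hxU, hxV⟩ := hF _ _ (hU.preimage hc) (hV.preimage hc) ⟨xu, hu⟩ ⟨xv, hv⟩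
  refine ⟨n, π x, ?_, hxV⟩
  rw [mem_preimage, ← (Semiconj.zpow_perm hsemi n).eq]
  exact hxU

theorem TopTransitive.dense_iUnion_preimage {f : Equiv.Perm X} (hf : TopTransitive f)
    {V : Set X} (hV : IsOpen V) (hne : V.Nonempty) :
    Dense (⋃ n : ℕ, ⇑(f ^ (n : ℤ)) ⁻¹' V) := by
  refine dense_iff_inter_open.2 fun O hO hOne => ?_
  obtain ⟨n, x, hxV, hxO⟩ := hf V O hV hO hne hOne
  exact ⟨x, hxO, mem_iUnion.2 ⟨n, hxV⟩⟩

section Periodic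

variable {F : Equiv.Perm X} {P : ℕ} {x y : X}

theorem periodic_dist_zpow_apply (hx : IsPeriodicPt F P x) (hy : IsPeriodicPt F P y) :
    Periodic (fun n : ℤ => dist ((F ^ n) x) ((F ^ n) y)) P := by
  have hshift : ∀ {w : X}, IsPeriodicPt F P w → ∀ n : ℤ, (F ^ (n + P)) w = (F ^ n) w := by
    intro w hw n
    rw [zpow_add, Equiv.Perm.mul_apply, zpow_natCast, ← Equiv.Perm.iterate_eq_pow, hw.eq]
  intro n
  simp only [hshift hx, hshift hy]

theorem dist_zpow_apply_lt_of_mem_Ws {ε : ℝ} (hP : 0 < P) (hx : IsPeriodicPt F P x)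
    (hy : IsPeriodicPt F P y) (h : y ∈ Ws F ε x) (n : ℤ) :
    dist ((F ^ n) x) ((F ^ n) y) < ε := by
  obtain ⟨m, hm⟩ := (periodic_dist_zpow_apply hx hy).exists_natCast_eq (by omega) n
  exact hm ▸ h m

theorem dist_zpow_apply_lt_of_mem_Wu {ε : ℝ} (hP : 0 < P) (hx : IsPeriodicPt F P x)
    (hy : IsPeriodicPt F P y) (h : y ∈ Wu F ε x) (n : ℤ) :
    dist ((F ^ n) x) ((F ^ n) y) < ε := by
  obtain ⟨m, hm⟩ := (periodic_dist_zpow_apply hx hy).exists_neg_natCast_eq (by omega) n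
  exact hm ▸ h m

end Periodic

theorem Expansive.apply_eq_of_mem_Ws_of_mem_Wu {F : Equiv.Perm X} {f : Equiv.Perm Y}
    {π : X → Y} {c ε : ℝ} (hf : Expansive f c) (hsemi : Semiconj π F f)
    (hπ : ∀ a b, dist a b < ε → dist (π a) (π b) < c) {z z' B : X} (hBs : B ∈ Ws F ε z)
    (hBu : B ∈ Wu F ε z') (hzz' : π z = π z') : π z = π B := by
  refine hf.eq_of_forall_dist_le fun n => ?_
  rcases Int.eq_nat_or_neg n with ⟨m, rfl | rfl⟩
  · rw [← (hsemi.zpow_perm _).eq, ← (hsemi.zpow_perm _).eq]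
    exact (hπ _ _ (hBs m)).le
  · rw [hzz', ← (hsemi.zpow_perm _).eq, ← (hsemi.zpow_perm _).eq]
    exact (hπ _ _ (hBu m)).le

theorem Expansive.eq_of_mem_Ws_of_mem_Wu {F : Equiv.Perm X} {c ε : ℝ} (hF : Expansive F c)
    (hε : 2 * ε ≤ c) {P : ℕ} (hP : 0 < P) {z z' B : X} (hz : IsPeriodicPt F P z)
    (hz' : IsPeriodicPt F P z') (hB : IsPeriodicPt F P B) (hBs : B ∈ Ws F ε z)
    (hBu : B ∈ Wu F ε z') : z = z' :=
  hF.eq_of_forall_dist_le fun n => by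
    linarith [dist_triangle_right ((F ^ n) z) ((F ^ n) z') ((F ^ n) B),
      dist_zpow_apply_lt_of_mem_Ws hP hz hB hBs n, dist_zpow_apply_lt_of_mem_Wu hP hz' hB hBu n]

theorem exists_pos_periodic_fibers_separated {F : Equiv.Perm X} {f : Equiv.Perm Y}
    {π : X → Y} {cX cY : ℝ} (hcc : CanonicalCoords F) (hF : Expansive F cX) (hcX : 0 < cX)
    (hf : Expansive f cY) (hcY : 0 < cY) (hπ : UniformContinuous π) (hsemi : Semiconj π F f)
    (hfin : ∀ y, (π ⁻¹' {y}).Finite) :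
    ∃ δ > 0, ∀ z z', π z = π z' → π z ∈ periodicPts f → dist z z' < δ → z = z' := by
  obtain ⟨ε₀, hε₀, hbracket⟩ := hcc
  obtain ⟨επ, hεπ, hπε⟩ := Metric.uniformContinuous_iff.1 hπ cY hcY
  set ε := min ε₀ (min (cX / 2) επ)
  have hε : 0 < ε := lt_min hε₀ (lt_min (half_pos hcX) hεπ)
  have hεcX : 2 * ε ≤ cX := by linarith [min_le_left (cX / 2) επ, min_le_right ε₀ (min (cX / 2) επ)]
  have hεπ' : ε ≤ επ := (min_le_right _ _).trans (min_le_right _ _)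
  obtain ⟨δ, hδ, hδbracket⟩ := hbracket ε hε (min_le_left _ _)
  refine ⟨δ, hδ, fun z z' hzz' hper hdist => ?_⟩
  obtain ⟨B, ⟨hBs, hBu⟩, -⟩ := hδbracket z z' hdist
  have hπB : π z = π B :=
    hf.apply_eq_of_mem_Ws_of_mem_Wu hsemi (fun _ _ hab => hπε (hab.trans_le hεπ')) hBs hBu hzz'
  have hperiodic : ∀ w, π w = π z → w ∈ periodicPts F := fun w hw =>
    mem_periodicPts_of_finite_fiber hsemi F.injective (hfin _) (hw ▸ hper)
  obtain ⟨Pz, hPz, hz⟩ := hperiodic z rfl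
  obtain ⟨Pz', hPz', hz'⟩ := hperiodic z' hzz'.symm
  obtain ⟨PB, hPB, hB⟩ := hperiodic B hπB.symm
  exact hF.eq_of_mem_Ws_of_mem_Wu hεcX (Nat.mul_pos (Nat.mul_pos hPz hPz') hPB)
    ((hz.mul_const Pz').mul_const PB) ((hz'.const_mul Pz).mul_const PB) (hB.const_mul _) hBs hBu

end Dynamics

theorem stmt3_general {X Y : Type*} [MetricSpace X] [CompactSpace X] [MetricSpace Y]
    (F : Equiv.Perm X) (f : Equiv.Perm Y)
    (hX : IsSmale F) (hXt : TopTransitive F) (hY : FinitelyPresented f)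
    (π : X → Y) (hπ : IsFactorMap F f π)
    (hfin : ∀ y : Y, (π ⁻¹' {y}).Finite)
    (M : ℕ) (hM : (∃ y : Y, (π ⁻¹' {y}).ncard = M) ∧ ∀ y : Y, M ≤ (π ⁻¹' {y}).ncard) :
    ∃ W : Set Y, IsOpen W ∧ Dense W ∧
      ∀ p ∈ W, IsPeriodicPoint f p → (π ⁻¹' {p}).ncard = M := by
  obtain ⟨-, -, ⟨cX, hcX, hFe⟩, hcc⟩ := hX
  obtain ⟨hfc, -, ⟨cY, hcY, hfe⟩, -⟩ := hY
  have hft : TopTransitive f := hXt.of_isFactorMap hπ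
  obtain ⟨hπc, -, hsemi : Semiconj π F f⟩ := hπ
  obtain ⟨δ, hδ, hsep⟩ := exists_pos_periodic_fibers_separated hcc hFe hcX hfe hcY
    (CompactSpace.uniformContinuous_of_continuous hπc) hsemi hfin
  obtain ⟨y₀, hy₀⟩ := hM.1
  obtain ⟨V, hVfib, hVo, hy₀V⟩ := _root_.eventually_nhds_iff.1
    (hπc.isClosedMap.eventually_preimage_singleton_subset isOpen_thickening
      (self_subset_thickening (half_pos hδ) (π ⁻¹' {y₀})))
  have hfn : ∀ n : ℕ, Continuous ⇑(f ^ (n : ℤ)) := fun n => by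
    simpa only [zpow_natCast, ← Equiv.Perm.iterate_eq_pow] using hfc.iterate n
  refine ⟨⋃ n : ℕ, ⇑(f ^ (n : ℤ)) ⁻¹' V, isOpen_iUnion fun n => hVo.preimage (hfn n),
    hft.dense_iUnion_preimage hVo ⟨y₀, hy₀V⟩, fun p hp hper => ?_⟩
  obtain ⟨n, hn⟩ := mem_iUnion.1 hp
  have hper' : (f ^ (n : ℤ)) p ∈ periodicPts f := by
    obtain ⟨N, hN, hNp⟩ := isPeriodicPoint_iff_mem_periodicPts.1 hper
    simpa only [zpow_natCast, ← Equiv.Perm.iterate_eq_pow] using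
      mk_mem_periodicPts hN (hNp.apply_iterate n)
  rw [← ncard_preimage_singleton_apply (hsemi.zpow_perm n), ← hy₀]
  refine le_antisymm (ncard_le_ncard_of_subset_thickening (hfin y₀) ?_ (hVfib _ hn)) (hy₀ ▸ hM.2 _)
  rintro a (ha : π a = _) b (hb : π b = _)
  exact hsep a b (ha.trans hb.symm) (ha ▸ hper')

/-- For a finite-to-one factor map `π` from a transitive Smale space to a
finitely presented system with minimal fiber cardinality `M`, there is a dense open set
`W ⊆ Y` in which every periodic point has exactly `M` preimages. -/
theorem stmt3 {X Y : Type*} [MetricSpace X] [CompactSpace X] [MetricSpace Y] [CompactSpace Y]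
    (F : Equiv.Perm X) (f : Equiv.Perm Y)
    (hX : IsSmale F) (hXt : TopTransitive F) (hY : FinitelyPresented f)
    (π : X → Y) (hπ : IsFactorMap F f π)
    (hfin : ∀ y : Y, (π ⁻¹' {y}).Finite)
    (M : ℕ) (hM : (∃ y : Y, (π ⁻¹' {y}).ncard = M) ∧ ∀ y : Y, M ≤ (π ⁻¹' {y}).ncard) :
    ∃ W : Set Y, IsOpen W ∧ Dense W ∧
      ∀ p ∈ W, IsPeriodicPoint f p → (π ⁻¹' {p}).ncard = M :=
  stmt3_general F f hX hXt hY π hπ hfin M hM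
end

section
/- Let (X,F) be a transitive Smale space, (Y,f) a transitive finitely presented system, and θ : X → Y a factor map. Then θ is injective on some nonempty open subset of X if and only if θ is u-resolving, s-resolving, and injective on a residual subset of X. -/
open Filter Topology Set

/-!
If `θ` is injective on a saturated open set `U` and `p ≠ q` are unstably asymptotic with
`θ p = θ q`, push them backwards until they are close, and bracket both with a point `g` whose
backward orbit enters `U` (transitivity). Expansiveness of `Y` forces the two brackets to have
the same image, injectivity on `U` forces them to coincide, and expansiveness of `X` then gives
`p = q`; the stable case is the same argument for `F⁻¹`, and the union of the iterates of `U` is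
an open dense set on which `θ` is injective.

Conversely, a u- and s-resolving factor map is injective on `δ`-balls: the bracket of nearby
`p`, `q` with `θ p = θ q` has their common image and is stably asymptotic to `p`, unstably to `q`.
The points with a one-point fibre then form an open set. If it were empty, Baire's theorem in `Y`
gives an open set over which `θ` has local inverses into two far apart balls; lifting the
residual set through both yields two distinct points of it with the same image.
-/

open Function

namespace Equiv.Perm

variable {X Y : Type*}

theorem zpow_apply_zpow (F : Perm X) (m n : ℤ) (x : X) :
    (F ^ m) ((F ^ n) x) = (F ^ (m + n)) x := by
  rw [zpow_add, mul_apply]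

theorem coe_symm_zpow (F : Perm X) (n : ℤ) : ⇑(F.symm ^ n) = ⇑(F ^ (-n)) := by
  rw [← inv_def, inv_zpow, zpow_neg]

theorem continuous_zpow [TopologicalSpace X] {F : Perm X} (hF : Continuous F)
    (hF' : Continuous F.symm) (n : ℤ) : Continuous ⇑(F ^ n) := by
  induction n using Int.induction_on with
  | zero => exact continuous_id
  | succ k ih => rw [zpow_add_one, coe_mul]; exact ih.comp hF
  | pred k ih => rw [zpow_sub_one, coe_mul, inv_def]; exact ih.comp hF'

theorem semiconj_symm {F : Perm X} {f : Perm Y} {θ : X → Y} (h : ∀ x, θ (F x) = f (θ x))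
    (x : X) : θ (F.symm x) = f.symm (θ x) := by
  rw [eq_symm_apply, ← h, apply_symm_apply]

theorem semiconj_zpow {F : Perm X} {f : Perm Y} {θ : X → Y} (h : ∀ x, θ (F x) = f (θ x))
    (n : ℤ) (x : X) : θ ((F ^ n) x) = (f ^ n) (θ x) := by
  induction n using Int.induction_on generalizing x with
  | zero => rfl
  | succ k ih => rw [zpow_add_one, zpow_add_one, mul_apply, mul_apply, ih, h]
  | pred k ih =>
    rw [zpow_sub_one, zpow_sub_one, mul_apply, mul_apply, inv_def, inv_def, ih, semiconj_symm h]

end Equiv.Perm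

open Equiv.Perm

theorem eq_of_zpow_mem_of_injOn {X Y : Type*} {F : Equiv.Perm X} {f : Equiv.Perm Y} {θ : X → Y}
    (hθ : ∀ x, θ (F x) = f (θ x)) {U : Set X} (hinj : InjOn θ U)
    (hsat : θ ⁻¹' (θ '' U) = U) {n : ℤ} {w w' : X} (hw : (F ^ n) w ∈ U) (h : θ w = θ w') :
    w = w' := by
  have himg : θ ((F ^ n) w) = θ ((F ^ n) w') := by
    rw [semiconj_zpow hθ, semiconj_zpow hθ, h]
  have hw' : (F ^ n) w' ∈ U := hsat ▸ ⟨_, hw, himg⟩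
  exact (F ^ n).injective (hinj hw hw' himg)

section Symmetry

variable {X : Type*} [MetricSpace X] (F : Equiv.Perm X)

theorem Ws_symm (ε : ℝ) (x : X) : Ws F.symm ε x = Wu F ε x := by
  simp only [Ws, Wu, coe_symm_zpow]

theorem Wu_symm (ε : ℝ) (x : X) : Wu F.symm ε x = Ws F ε x := by
  simp only [Ws, Wu, coe_symm_zpow, neg_neg]

theorem stableSet_symm (x : X) : stableSet F.symm x = unstableSet F x := by
  simp only [stableSet, unstableSet, coe_symm_zpow]

theorem unstableSet_symm (x : X) : unstableSet F.symm x = stableSet F x := by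
  simp only [stableSet, unstableSet, coe_symm_zpow, neg_neg]

variable {F}

theorem CanonicalCoords.symm (h : CanonicalCoords F) : CanonicalCoords F.symm := by
  obtain ⟨ε₀, hε₀, H⟩ := h
  refine ⟨ε₀, hε₀, fun ε hε hεε₀ => ?_⟩
  obtain ⟨δ, hδ, hbr⟩ := H ε hε hεε₀
  refine ⟨δ, hδ, fun x y hxy => ?_⟩
  simpa only [Ws_symm, Wu_symm, inter_comm] using hbr y x (by rwa [dist_comm])

theorem TopTransitive.symm (h : TopTransitive F) : TopTransitive F.symm := by
  intro U V hU hV hUne hVne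
  obtain ⟨n, x, hxV, hxU⟩ := h V U hV hU hVne hUne
  refine ⟨n, (F ^ (n : ℤ)) x, ?_, hxV⟩
  rwa [mem_preimage, coe_symm_zpow, zpow_apply_zpow, neg_add_cancel, zpow_zero, one_apply]

theorem Expansive.symm {c : ℝ} (h : Expansive F c) : Expansive F.symm c := by
  intro p q hpq
  obtain ⟨n, hn⟩ := h p q hpq
  exact ⟨-n, by rwa [coe_symm_zpow, neg_neg]⟩

end Symmetry

section Expansive

variable {X : Type*} [MetricSpace X] {F : Equiv.Perm X}

theorem mem_Ws_self {ε : ℝ} (hε : 0 < ε) (x : X) : x ∈ Ws F ε x := fun _ => by simpa using hε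

theorem mem_Wu_self {ε : ℝ} (hε : 0 < ε) (x : X) : x ∈ Wu F ε x := fun _ => by simpa using hε

theorem mem_stableSet_self (x : X) : x ∈ stableSet F x := by
  simp [stableSet]

theorem mem_unstableSet_self (x : X) : x ∈ unstableSet F x := by
  simp [unstableSet]

theorem Expansive.eq_of_forall_dist_le_s9 {c : ℝ} (h : Expansive F c) {x y : X}
    (hfwd : ∀ n : ℕ, dist ((F ^ (n : ℤ)) x) ((F ^ (n : ℤ)) y) ≤ c)
    (hbwd : ∀ n : ℕ, dist ((F ^ (-(n : ℤ))) x) ((F ^ (-(n : ℤ))) y) ≤ c) : x = y := by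
  by_contra hne
  obtain ⟨m, hm⟩ := h x y hne
  rcases Int.eq_nat_or_neg m with ⟨k, rfl | rfl⟩
  · exact (hfwd k).not_gt hm
  · exact (hbwd k).not_gt hm

theorem Expansive.Ws_subset_stableSet [CompactSpace X] (hF : Continuous F)
    (hF' : Continuous F.symm) {c ε : ℝ} (h : Expansive F c) (hεc : ε ≤ c) (x : X) :
    Ws F ε x ⊆ stableSet F x := by
  intro y hy
  set u : ℕ → X × X := fun n => ((F ^ (n : ℤ)) x, (F ^ (n : ℤ)) y)
  -- a limit point of the pair's forward orbit has its whole orbit ε-close, so it is diagonal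
  have hdiag : ∀ {l : Filter ℕ} {z : X × X}, l ≤ atTop → MapClusterPt z l u → z.1 = z.2 := by
    intro l z hl hz
    have hle : ∀ m : ℤ, dist ((F ^ m) z.1) ((F ^ m) z.2) ≤ c := by
      intro m
      have hFm := continuous_zpow hF hF' m
      have hC : IsClosed {z : X × X | dist ((F ^ m) z.1) ((F ^ m) z.2) ≤ ε} :=
        isClosed_le (by fun_prop) continuous_const
      refine (hC.mem_of_mapClusterPt hz (hl ?_)).trans hεc
      filter_upwards [eventually_ge_atTop m.natAbs] with n hn
      have hmn : m + n = ((m + n).toNat : ℤ) := by omega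
      change dist ((F ^ m) ((F ^ (n : ℤ)) x)) ((F ^ m) ((F ^ (n : ℤ)) y)) ≤ ε
      rw [zpow_apply_zpow, zpow_apply_zpow, hmn]
      exact (hy _).le
    exact h.eq_of_forall_dist_le_s9 (fun n => hle n) (fun n => hle (-n))
  by_contra hnot
  obtain ⟨s, hs, hfreq⟩ := not_tendsto_iff_exists_frequently_notMem.1 hnot
  obtain ⟨α, hα, hball⟩ := Metric.mem_nhds_iff.1 hs
  set l := atTop ⊓ 𝓟 {n | α ≤ dist (u n).1 (u n).2}
  have : l.NeBot := frequently_iff_neBot.1 <| hfreq.mono fun n hn => by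
    by_contra! hlt
    apply hn (hball _)
    rwa [Metric.mem_ball, Real.dist_eq, sub_zero, abs_of_nonneg dist_nonneg]
  obtain ⟨z, hz⟩ := exists_clusterPt_of_compactSpace (map u l)
  have hzα : α ≤ dist z.1 z.2 := (isClosed_le continuous_const continuous_dist).mem_of_mapClusterPt
    hz (mem_inf_of_right (mem_principal_self _))
  rw [hdiag inf_le_left hz, dist_self] at hzα
  exact hzα.not_gt hα

theorem Expansive.Wu_subset_unstableSet [CompactSpace X] (hF : Continuous F)
    (hF' : Continuous F.symm) {c ε : ℝ} (h : Expansive F c) (hεc : ε ≤ c) (x : X) :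
    Wu F ε x ⊆ unstableSet F x := by
  rw [← Ws_symm, ← stableSet_symm]
  exact h.symm.Ws_subset_stableSet hF' (by simpa using hF) hεc x

theorem exists_zpow_neg_mem_Wu {x p q : X} (hp : p ∈ unstableSet F x)
    (hq : q ∈ unstableSet F x) {η : ℝ} (hη : 0 < η) :
    ∃ n : ℕ, (F ^ (-(n : ℤ))) q ∈ Wu F η ((F ^ (-(n : ℤ))) p) := by
  have hpq : Tendsto (fun n : ℕ => dist ((F ^ (-(n : ℤ))) p) ((F ^ (-(n : ℤ))) q))
      atTop (𝓝 0) := by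
    have h := hp.add hq
    rw [add_zero] at h
    exact squeeze_zero (fun _ => dist_nonneg)
      (fun n => dist_triangle_left _ _ ((F ^ (-(n : ℤ))) x)) h
  obtain ⟨n, hn⟩ := eventually_atTop.1 (hpq.eventually (gt_mem_nhds hη))
  refine ⟨n, fun k => ?_⟩
  rw [zpow_apply_zpow, zpow_apply_zpow, ← neg_add, ← Nat.cast_add]
  exact hn _ (Nat.le_add_left n k)

theorem CanonicalCoords.exists_bracket_scale {Y : Type*} [MetricSpace Y] [CompactSpace X]
    (hCC : CanonicalCoords F) {θ : X → Y} (hθc : Continuous θ) {η κ : ℝ} (hη : 0 < η)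
    (hκ : 0 < κ) :
    ∃ ε > 0, ε ≤ η ∧ (∀ u v, dist u v < 2 * ε → dist (θ u) (θ v) ≤ κ) ∧
      ∃ δ > 0, ∀ x y : X, dist x y < δ → ∃! z, z ∈ Ws F ε x ∩ Wu F ε y := by
  obtain ⟨ε₀, hε₀, hbr⟩ := hCC
  obtain ⟨ε₁, hε₁, hmod⟩ := Metric.uniformContinuous_iff.1
    (CompactSpace.uniformContinuous_of_continuous hθc) κ hκ
  have hε : 0 < min (min η ε₀) (ε₁ / 2) := by positivity
  refine ⟨_, hε, (min_le_left _ _).trans (min_le_left _ _), fun u v huv => (hmod ?_).le,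
    hbr _ hε ((min_le_left _ _).trans (min_le_right _ _))⟩
  linarith [min_le_right (min η ε₀) (ε₁ / 2)]

end Expansive

def UniformlyLocallyInjective {X Y : Type*} [MetricSpace X] (θ : X → Y) : Prop :=
  ∃ δ > 0, ∀ p q : X, dist p q < δ → θ p = θ q → p = q

section Factor

variable {X Y : Type*} [MetricSpace X] [MetricSpace Y] {F : Equiv.Perm X}
  {f : Equiv.Perm Y} {θ : X → Y}

theorem factor_eq_of_mem_Ws_inter_Wu (hθ : ∀ x, θ (F x) = f (θ x)) {c ε : ℝ}
    (hexp : Expansive f c) (hmod : ∀ u v, dist u v < 2 * ε → dist (θ u) (θ v) ≤ c / 2)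
    {a a' g w w' : X} (ha : θ a = θ a') (hw : w ∈ Ws F ε a ∩ Wu F ε g)
    (hw' : w' ∈ Ws F ε a' ∩ Wu F ε g) : θ w = θ w' := by
  have hε : 0 ≤ ε := dist_nonneg.trans (hw.1 0).le
  refine hexp.eq_of_forall_dist_le_s9 (fun n => ?_) (fun n => ?_) <;>
    rw [← semiconj_zpow hθ, ← semiconj_zpow hθ]
  · have hfa : θ ((F ^ (n : ℤ)) a) = θ ((F ^ (n : ℤ)) a') := by
      rw [semiconj_zpow hθ, semiconj_zpow hθ, ha]
    have h₁ := hmod _ _ (by rw [dist_comm]; linarith [hw.1 n])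
    have h₂ := hmod _ _ (by linarith [hw'.1 n])
    calc dist (θ ((F ^ (n : ℤ)) w)) (θ ((F ^ (n : ℤ)) w'))
        ≤ dist (θ ((F ^ (n : ℤ)) w)) (θ ((F ^ (n : ℤ)) a))
          + dist (θ ((F ^ (n : ℤ)) a')) (θ ((F ^ (n : ℤ)) w')) := hfa ▸ dist_triangle _ _ _
      _ ≤ c := by linarith
  · have hclose := dist_triangle_left ((F ^ (-(n : ℤ))) w) ((F ^ (-(n : ℤ))) w')
      ((F ^ (-(n : ℤ))) g)
    have h := hmod ((F ^ (-(n : ℤ))) w) _ (by linarith [hw.2 n, hw'.2 n])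
    linarith [dist_nonneg.trans h]

theorem uResolving_of_injOn_isOpen [CompactSpace X] (hCC : CanonicalCoords F)
    (hexpX : ∃ c > 0, Expansive F c) (hexpY : ∃ c > 0, Expansive f c) (htr : TopTransitive F)
    (hθc : Continuous θ) (hθ : ∀ x, θ (F x) = f (θ x)) {U : Set X} (hUo : IsOpen U)
    (hUne : U.Nonempty) (hUinj : InjOn θ U) (hUsat : θ ⁻¹' (θ '' U) = U) :
    UResolving F θ := by
  intro x p hp q hq hpq
  obtain ⟨cX, hcX, hEX⟩ := hexpX
  obtain ⟨cY, hcY, hEY⟩ := hexpY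
  obtain ⟨u₀, hu₀⟩ := hUne
  obtain ⟨r, hr, hball⟩ := Metric.isOpen_iff.1 hUo u₀ hu₀
  obtain ⟨ε, hε, hεη, hmod, δ, hδ, hbr⟩ :=
    hCC.exists_bracket_scale hθc (lt_min (half_pos hr) (half_pos hcX)) (half_pos hcY)
  obtain ⟨hεr, hεc⟩ := le_min_iff.1 hεη
  obtain ⟨n₀, hn₀⟩ := exists_zpow_neg_mem_Wu hp hq (lt_min hε (half_pos hδ))
  set a := (F ^ (-(n₀ : ℤ))) p
  set a' := (F ^ (-(n₀ : ℤ))) q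
  have haa' : dist a a' < δ / 2 := by simpa using (hn₀ 0).trans_le (min_le_right _ _)
  obtain ⟨n, z, hga, hz⟩ := htr (Metric.ball a (δ / 2)) (Metric.ball u₀ (r / 2))
    Metric.isOpen_ball Metric.isOpen_ball ⟨a, Metric.mem_ball_self (half_pos hδ)⟩
    ⟨u₀, Metric.mem_ball_self (half_pos hr)⟩
  set g := (F ^ (n : ℤ)) z
  rw [mem_preimage, Metric.mem_ball, dist_comm] at hga
  obtain ⟨w, hw, -⟩ := hbr a g (by linarith)
  obtain ⟨w', hw', -⟩ := hbr a' g (by linarith [dist_triangle_left a' g a])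
  have hθa : θ a = θ a' := by rw [semiconj_zpow hθ, semiconj_zpow hθ, hpq]
  have hθw : θ w = θ w' := factor_eq_of_mem_Ws_inter_Wu hθ hEY hmod hθa hw hw'
  have hwU : (F ^ (-(n : ℤ))) w ∈ U := by
    have hgz : (F ^ (-(n : ℤ))) g = z := by
      rw [zpow_apply_zpow, neg_add_cancel, zpow_zero, one_apply]
    have hwz := hw.2 n
    rw [hgz] at hwz
    exact hball (Metric.mem_ball.2 (by
      linarith [dist_triangle_left ((F ^ (-(n : ℤ))) w) u₀ z, Metric.mem_ball.1 hz]))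
  have hww' : w = w' := eq_of_zpow_mem_of_injOn hθ hUinj hUsat hwU hθw
  have haa : a = a' := by
    refine hEX.eq_of_forall_dist_le_s9 (fun k => ?_) (fun k => ?_)
    · have := dist_triangle_right ((F ^ (k : ℤ)) a) ((F ^ (k : ℤ)) a') ((F ^ (k : ℤ)) w)
      linarith [hw.1 k, hww' ▸ hw'.1 k]
    · linarith [hn₀ k, min_le_left ε (δ / 2)]
  exact (F ^ (-(n₀ : ℤ))).injective haa

theorem sResolving_of_injOn_isOpen [CompactSpace X] (hCC : CanonicalCoords F)
    (hexpX : ∃ c > 0, Expansive F c) (hexpY : ∃ c > 0, Expansive f c) (htr : TopTransitive F)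
    (hθc : Continuous θ) (hθ : ∀ x, θ (F x) = f (θ x)) {U : Set X} (hUo : IsOpen U)
    (hUne : U.Nonempty) (hUinj : InjOn θ U) (hUsat : θ ⁻¹' (θ '' U) = U) :
    SResolving F θ := by
  obtain ⟨cX, hcX, hEX⟩ := hexpX
  obtain ⟨cY, hcY, hEY⟩ := hexpY
  intro x
  simpa only [unstableSet_symm] using uResolving_of_injOn_isOpen hCC.symm ⟨cX, hcX, hEX.symm⟩
    ⟨cY, hcY, hEY.symm⟩ htr.symm hθc (semiconj_symm hθ) hUo hUne hUinj hUsat x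

theorem uniformlyLocallyInjective_of_resolving [CompactSpace X] (hF : Continuous F)
    (hF' : Continuous F.symm) (hCC : CanonicalCoords F) (hexpX : ∃ c > 0, Expansive F c)
    (hexpY : ∃ c > 0, Expansive f c) (hθc : Continuous θ) (hθ : ∀ x, θ (F x) = f (θ x))
    (hu : UResolving F θ) (hs : SResolving F θ) : UniformlyLocallyInjective θ := by
  obtain ⟨cX, hcX, hEX⟩ := hexpX
  obtain ⟨cY, hcY, hEY⟩ := hexpY
  obtain ⟨ε, hε, hεc, hmod, δ, hδ, hbr⟩ := hCC.exists_bracket_scale hθc hcX (half_pos hcY)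
  refine ⟨δ, hδ, fun p q hpq hθpq => ?_⟩
  obtain ⟨z, hz, -⟩ := hbr p q hpq
  have hθz : θ z = θ q :=
    factor_eq_of_mem_Ws_inter_Wu hθ hEY hmod hθpq hz ⟨mem_Ws_self hε q, mem_Wu_self hε q⟩
  have hzp : z = p := hs p (hEX.Ws_subset_stableSet hF hF' hεc p hz.1) (mem_stableSet_self p)
    (hθz.trans hθpq.symm)
  have hzq : z = q :=
    hu q (hEX.Wu_subset_unstableSet hF hF' hεc q hz.2) (mem_unstableSet_self q) hθz
  rw [← hzp, hzq]

end Factor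

theorem exists_residual_injOn_of_injOn_isOpen {X Y : Type*} [MetricSpace X]
    {F : Equiv.Perm X} {f : Equiv.Perm Y} {θ : X → Y} (hF : Continuous F) (hF' : Continuous F.symm)
    (htr : TopTransitive F) (hθ : ∀ x, θ (F x) = f (θ x)) {U : Set X} (hUo : IsOpen U)
    (hUne : U.Nonempty) (hUinj : InjOn θ U) (hUsat : θ ⁻¹' (θ '' U) = U) :
    ∃ R ∈ residual X, InjOn θ R := by
  set R := ⋃ n : ℤ, (F ^ n) ⁻¹' U
  have hRo : IsOpen R := isOpen_iUnion fun n => hUo.preimage (continuous_zpow hF hF' n)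
  have hUR : U ⊆ R := fun u hu => mem_iUnion.2 ⟨0, hu⟩
  have hRd : Dense R := by
    refine dense_iff_inter_open.2 fun O hO hOne => ?_
    obtain ⟨n, x, hxR, hxO⟩ := htr R O hRo hO (hUne.mono hUR) hOne
    obtain ⟨m, hm⟩ := mem_iUnion.1 hxR
    exact ⟨x, hxO, mem_iUnion.2 ⟨m + n, by rwa [mem_preimage, ← zpow_apply_zpow]⟩⟩
  refine ⟨R, residual_of_dense_open hRo hRd, fun p hp q _ hpq => ?_⟩
  obtain ⟨m, hm⟩ := mem_iUnion.1 hp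
  exact eq_of_zpow_mem_of_injOn hθ hUinj hUsat hm hpq

section Baire

variable {X Y : Type*} [TopologicalSpace X] [TopologicalSpace Y] [T2Space Y] {θ : X → Y}

theorem isOpen_inter_image_inter (hθc : Continuous θ) {K : Set X} (hK : IsCompact K)
    (hinj : InjOn θ K) {W : Set Y} (hW : IsOpen W) (hWK : W ⊆ θ '' K) {O : Set X}
    (hO : IsOpen O) : IsOpen (W ∩ θ '' (K ∩ O)) := by
  have h : W ∩ θ '' (K ∩ O) = W \ θ '' (K \ O) := by
    ext y
    constructor
    · rintro ⟨hyW, k, ⟨hkK, hkO⟩, rfl⟩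
      exact ⟨hyW, fun ⟨k', ⟨hk'K, hk'O⟩, hk'⟩ => hk'O (hinj hk'K hkK hk' ▸ hkO)⟩
    · rintro ⟨hyW, hy⟩
      obtain ⟨k, hkK, rfl⟩ := hWK hyW
      exact ⟨hyW, k, ⟨hkK, by_contra fun hkO => hy ⟨k, ⟨hkK, hkO⟩, rfl⟩⟩, rfl⟩
  rw [h]
  exact hW.sdiff ((hK.diff hO).image hθc).isClosed

theorem exists_residual_inter_subset_image (hθc : Continuous θ) {K : Set X} (hK : IsCompact K)
    (hinj : InjOn θ K) {W : Set Y} (hW : IsOpen W) (hWK : W ⊆ θ '' interior K) {R : Set X}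
    (hR : R ∈ residual X) : ∃ S ∈ residual Y, W ∩ S ⊆ θ '' (K ∩ R) := by
  obtain ⟨T, hTo, hTd, hTc, hTR⟩ := mem_residual_iff.1 hR
  have hWK' : W ⊆ θ '' K := hWK.trans (image_mono interior_subset)
  have hdense : ∀ D ∈ T, W ⊆ closure (W ∩ θ '' (K ∩ D)) := by
    intro D hD y hy
    obtain ⟨p, hp, rfl⟩ := hWK hy
    refine mem_closure_iff.2 fun o ho hyo => ?_
    obtain ⟨d, ⟨hdK, hdo, hdW⟩, hdD⟩ := (hTd D hD).inter_open_nonempty _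
      (isOpen_interior.inter ((ho.inter hW).preimage hθc)) ⟨p, hp, hyo, hy⟩
    exact ⟨θ d, hdo, hdW, d, ⟨interior_subset hdK, hdD⟩, rfl⟩
  refine ⟨⋂ D ∈ T, (W ∩ θ '' (K ∩ D)) ∪ (closure W)ᶜ, ?_, ?_⟩
  · refine (countable_bInter_mem hTc).2 fun D hD => residual_of_dense_open ?_ ?_
    · exact (isOpen_inter_image_inter hθc hK hinj hW hWK' (hTo D hD)).union
        isClosed_closure.isOpen_compl
    · intro y
      by_cases hy : y ∈ closure W
      · exact closure_mono subset_union_left (closure_minimal (hdense D hD) isClosed_closure hy)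
      · exact subset_closure (Or.inr hy)
  · rintro y ⟨hyW, hyS⟩
    obtain ⟨p, hp, rfl⟩ := hWK hyW
    refine ⟨p, ⟨interior_subset hp, hTR fun D hD => ?_⟩, rfl⟩
    obtain ⟨q, ⟨hqK, hqD⟩, hq⟩ := ((mem_iInter₂.1 hyS D hD).resolve_right
      (not_not.2 (subset_closure hyW))).2
    rwa [← hinj hqK (interior_subset hp) hq]

end Baire

namespace UniformlyLocallyInjective

open Metric

variable {X Y : Type*} [MetricSpace X] [CompactSpace X] [MetricSpace Y] {θ : X → Y}

theorem isOpen_setOf_fiber_subsingleton (hθc : Continuous θ) (hloc : UniformlyLocallyInjective θ) :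
    IsOpen {x | ∀ q, θ q = θ x → q = x} := by
  obtain ⟨δ, hδ, hloc⟩ := hloc
  -- a second preimage of `θ x` is at distance at least `δ` from `x`
  have hcompl : {x | ∀ q, θ q = θ x → q = x}ᶜ =
      Prod.fst '' {pq : X × X | θ pq.1 = θ pq.2 ∧ δ ≤ dist pq.1 pq.2} := by
    ext x
    simp only [mem_compl_iff, mem_ofPred_eq, not_forall, mem_image, Prod.exists,
      exists_and_right, exists_eq_right]
    constructor
    · rintro ⟨q, hq, hqx⟩
      exact ⟨q, hq.symm, le_of_not_gt fun h => hqx (hloc q x (by rwa [dist_comm]) hq)⟩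
    · rintro ⟨q, hq, hd⟩
      refine ⟨q, hq.symm, fun hqx => ?_⟩
      subst hqx
      exact hd.not_gt (by rwa [dist_self])
  rw [← isClosed_compl_iff, hcompl]
  exact isClosedMap_fst_of_compactSpace _ ((isClosed_eq (by fun_prop) (by fun_prop)).inter
    (isClosed_le continuous_const continuous_dist))

theorem exists_forall_eq_of_injOn_residual [CompactSpace Y] [Nonempty X] (hθc : Continuous θ)
    (hθs : Surjective θ) (hloc : UniformlyLocallyInjective θ) {R : Set X}
    (hR : R ∈ residual X) (hRinj : InjOn θ R) : ∃ x, ∀ q, θ q = θ x → q = x := by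
  obtain ⟨δ, hδ, hloc⟩ := hloc
  by_contra! hpartner
  set β := δ / 8 with hβ
  have hβpos : 0 < β := by positivity
  obtain ⟨t, -, ht, hcov⟩ := finite_cover_balls_of_compact (isCompact_univ (X := X)) hβpos
  set P := {ab ∈ t ×ˢ t | 4 * β < dist ab.1 ab.2}
  set C : X × X → Set Y := fun ab => θ '' closedBall ab.1 β ∩ θ '' closedBall ab.2 β
  -- the two preimages of a point are `δ` apart, so the centres of their `β`-balls are `4β` apart
  have hcover : ⋃ ab ∈ P, C ab = univ := by
    refine eq_univ_of_forall fun y => ?_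
    obtain ⟨x, rfl⟩ := hθs y
    obtain ⟨x', hx', hx'x⟩ := hpartner x
    obtain ⟨a, hat, hxa⟩ := mem_iUnion₂.1 (hcov (mem_univ x))
    obtain ⟨b, hbt, hx'b⟩ := mem_iUnion₂.1 (hcov (mem_univ x'))
    have hd : δ ≤ dist x x' := le_of_not_gt fun h => hx'x (hloc x' x (by rwa [dist_comm]) hx')
    refine mem_iUnion₂.2 ⟨(a, b), ⟨mk_mem_prod hat hbt, ?_⟩,
      ⟨x, ball_subset_closedBall hxa, rfl⟩, ⟨x', ball_subset_closedBall hx'b, hx'⟩⟩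
    rw [mem_ball] at hxa hx'b
    show 4 * β < dist a b
    linarith [dist_triangle4 x a b x', dist_comm x' b, dist_comm x a]
  have hC : ∀ ab ∈ P, IsClosed (C ab) := fun ab _ =>
    ((isCompact_closedBall _ _).image hθc).isClosed.inter
      ((isCompact_closedBall _ _).image hθc).isClosed
  have : Nonempty Y := .map θ ‹_›
  obtain ⟨y, hy⟩ := (dense_biUnion_interior_of_closed hC
    ((ht.prod ht).subset (sep_subset _ _)).countable hcover).nonempty
  obtain ⟨⟨a, b⟩, hab, hyW⟩ := mem_iUnion₂.1 hy
  have hinj : ∀ c : X, InjOn θ (closedBall c (2 * β)) := fun c p hp q hq h =>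
    hloc p q (by linarith [dist_triangle_right p q c, mem_closedBall.1 hp, mem_closedBall.1 hq]) h
  have hWK : ∀ c : X, θ '' closedBall c β ⊆ θ '' interior (closedBall c (2 * β)) := fun c =>
    image_mono ((closedBall_subset_ball (by linarith)).trans ball_subset_interior_closedBall)
  obtain ⟨Sa, hSa, hSaW⟩ := exists_residual_inter_subset_image hθc (isCompact_closedBall a _)
    (hinj a) isOpen_interior ((interior_subset.trans inter_subset_left).trans (hWK a)) hR
  obtain ⟨Sb, hSb, hSbW⟩ := exists_residual_inter_subset_image hθc (isCompact_closedBall b _)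
    (hinj b) isOpen_interior ((interior_subset.trans inter_subset_right).trans (hWK b)) hR
  obtain ⟨y', hy'W, hy'a, hy'b⟩ :=
    (dense_of_mem_residual (inter_mem hSa hSb)).inter_open_nonempty _ isOpen_interior ⟨y, hyW⟩
  obtain ⟨p, ⟨hpa, hpR⟩, rfl⟩ := hSaW ⟨hy'W, hy'a⟩
  obtain ⟨q, ⟨hqb, hqR⟩, hq⟩ := hSbW ⟨hy'W, hy'b⟩
  obtain rfl := hRinj hqR hpR hq
  have hab' : 4 * β < dist a b := hab.2
  linarith [dist_triangle a q b, dist_comm a q, mem_closedBall.1 hpa, mem_closedBall.1 hqb]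

theorem exists_isOpen_injOn_of_injOn_residual [CompactSpace Y] [Nonempty X] (hθc : Continuous θ)
    (hθs : Surjective θ) (hloc : UniformlyLocallyInjective θ) {R : Set X}
    (hR : R ∈ residual X) (hRinj : InjOn θ R) :
    ∃ U : Set X, IsOpen U ∧ U.Nonempty ∧ InjOn θ U ∧ θ ⁻¹' (θ '' U) = U := by
  refine ⟨{x | ∀ q, θ q = θ x → q = x}, hloc.isOpen_setOf_fiber_subsingleton hθc,
    hloc.exists_forall_eq_of_injOn_residual hθc hθs hR hRinj, fun p _ q hq h => hq p h, ?_⟩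
  refine Subset.antisymm ?_ (subset_preimage_image _ _)
  rintro x ⟨u, hu, hux⟩ q hq
  rw [hu q (hq.trans hux.symm), hu x hux.symm]

end UniformlyLocallyInjective

theorem stmt9_general {X Y : Type*} [MetricSpace X] [CompactSpace X] [MetricSpace Y] [CompactSpace Y]
    (F : Equiv.Perm X) (f : Equiv.Perm Y)
    (hX : IsSmale F) (hXt : TopTransitive F)
    (hY : FinitelyPresented f)
    (θ : X → Y) (hθ : IsFactorMap F f θ) :
    (∃ U : Set X, IsOpen U ∧ U.Nonempty ∧ Set.InjOn θ U ∧ θ ⁻¹' (θ '' U) = U) ↔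
      (UResolving F θ ∧ SResolving F θ ∧ ∃ R ∈ residual X, Set.InjOn θ R) := by
  obtain ⟨hF, hF', hexpX, hCC⟩ := hX
  obtain ⟨hθc, hθs, hθF⟩ := hθ
  obtain ⟨-, -, hexpY, _, _, -, -, ⟨s, -⟩, φ, -⟩ := hY
  constructor
  · rintro ⟨U, hUo, hUne, hUinj, hUsat⟩
    exact ⟨uResolving_of_injOn_isOpen hCC hexpX hexpY hXt hθc hθF hUo hUne hUinj hUsat,
      sResolving_of_injOn_isOpen hCC hexpX hexpY hXt hθc hθF hUo hUne hUinj hUsat,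
      exists_residual_injOn_of_injOn_isOpen hF hF' hXt hθF hUo hUne hUinj hUsat⟩
  · rintro ⟨hu, hs, R, hR, hRinj⟩
    have : Nonempty X := ⟨(hθs (φ s)).choose⟩
    exact (uniformlyLocallyInjective_of_resolving hF hF' hCC hexpX hexpY hθc hθF hu hs
      ).exists_isOpen_injOn_of_injOn_residual hθc hθs hR hRinj

/-- A factor map from a transitive Smale space to a transitive finitely
presented system is injective on a nonempty open set iff it is u-resolving, s-resolving
and injective on a residual set. -/
theorem stmt9 {X Y : Type*} [MetricSpace X] [CompactSpace X] [MetricSpace Y] [CompactSpace Y]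
    (F : Equiv.Perm X) (f : Equiv.Perm Y)
    (hX : IsSmale F) (hXt : TopTransitive F)
    (hY : FinitelyPresented f) (hYt : TopTransitive f)
    (θ : X → Y) (hθ : IsFactorMap F f θ) :
    (∃ U : Set X, IsOpen U ∧ U.Nonempty ∧ Set.InjOn θ U ∧ θ ⁻¹' (θ '' U) = U) ↔
      (UResolving F θ ∧ SResolving F θ ∧ ∃ R ∈ residual X, Set.InjOn θ R) :=
  stmt9_general F f hX hXt hY θ hθ
end
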